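/- arXiv:2010.09279 — 2 statements merged into one kernel-verified Lean document; each statement's English description precedes it below -/
import Mathlib

section
/- For x ∈ ℝ³ with ‖x‖_H ≠ 0, the horizontal Laplacian of ‖x‖_H² equals Δ_H(‖x‖_H²) = 9(x₁²+x₂²)/‖x‖_H² − |D_H(‖x‖_H²)|²/‖x‖_H². -/
/-- Partial derivative of `u` in the `i`-th coordinate direction. -/
noncomputable def pd (i : Fin 3) (u : (Fin 3 → ℝ) → ℝ) (x : Fin 3 → ℝ) : ℝ :=
  fderiv ℝ u x (Pi.single i 1)

/-- The Heisenberg vector field X₁ = ∂₁ - x₂ ∂₃. -/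
noncomputable def X1 (u : (Fin 3 → ℝ) → ℝ) (x : Fin 3 → ℝ) : ℝ :=
  pd 0 u x - x 1 * pd 2 u x

/-- The Heisenberg vector field X₂ = ∂₂ + x₁ ∂₃. -/
noncomputable def X2 (u : (Fin 3 → ℝ) → ℝ) (x : Fin 3 → ℝ) : ℝ :=
  pd 1 u x + x 0 * pd 2 u x

/-- The Heisenberg norm ‖x‖_H = ((x₁²+x₂²)² + x₃²)^{1/4}. -/
noncomputable def hnorm (x : Fin 3 → ℝ) : ℝ :=
  ((x 0 ^ 2 + x 1 ^ 2) ^ 2 + (x 2) ^ 2) ^ ((1 : ℝ) / 4)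

/-- The squared Heisenberg norm, ‖x‖_H² = √((x₁²+x₂²)² + x₃²). -/
noncomputable def hnormSq (x : Fin 3 → ℝ) : ℝ :=
  Real.sqrt ((x 0 ^ 2 + x 1 ^ 2) ^ 2 + (x 2) ^ 2)

/-
With F = (x₁² + x₂²)² + x₃² we have ‖x‖_H² = √F. For any vector field X, the chain and quotient
rules together with X√F = XF / (2√F) give, where F > 0,
  X(X√F) = X(XF) / (2√F) - (X√F)² / √F.
Summing over X₁ and X₂ reduces the claim to the polynomial identity X₁²F + X₂²F = 18 (x₁² + x₂²).
-/

open Filter Topology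

section DerivAlong

variable {E : Type*} [NormedAddCommGroup E] [NormedSpace ℝ E] (V : E → E) {f g : E → ℝ} {x : E}

noncomputable def derivAlong (u : E → ℝ) (x : E) : ℝ :=
  fderiv ℝ u x (V x)

theorem derivAlong_congr (h : f =ᶠ[𝓝 x] g) : derivAlong V f x = derivAlong V g x := by
  rw [derivAlong, derivAlong, h.fderiv_eq]

theorem derivAlong_const (c : ℝ) : derivAlong V (fun _ => c) x = 0 := by
  simp [derivAlong]

theorem derivAlong_add (hf : DifferentiableAt ℝ f x) (hg : DifferentiableAt ℝ g x) :
    derivAlong V (fun y => f y + g y) x = derivAlong V f x + derivAlong V g x := by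
  simp [derivAlong, fderiv_fun_add hf hg]

theorem derivAlong_sub (hf : DifferentiableAt ℝ f x) (hg : DifferentiableAt ℝ g x) :
    derivAlong V (fun y => f y - g y) x = derivAlong V f x - derivAlong V g x := by
  simp [derivAlong, fderiv_fun_sub hf hg]

theorem derivAlong_mul (hf : DifferentiableAt ℝ f x) (hg : DifferentiableAt ℝ g x) :
    derivAlong V (fun y => f y * g y) x = f x * derivAlong V g x + g x * derivAlong V f x := by
  simp [derivAlong, fderiv_fun_mul hf hg]

theorem derivAlong_const_mul (hf : DifferentiableAt ℝ f x) (c : ℝ) :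
    derivAlong V (fun y => c * f y) x = c * derivAlong V f x := by
  simp [derivAlong, fderiv_const_mul hf]

theorem derivAlong_comp {φ : ℝ → ℝ} {φ' : ℝ} (hφ : HasDerivAt φ φ' (f x))
    (hf : DifferentiableAt ℝ f x) :
    derivAlong V (fun y => φ (f y)) x = φ' * derivAlong V f x := by
  have h : HasFDerivAt (fun y => φ (f y)) (φ' • fderiv ℝ f x) x :=
    hφ.comp_hasFDerivAt x hf.hasFDerivAt
  simp [derivAlong, h.fderiv]

theorem derivAlong_pow (hf : DifferentiableAt ℝ f x) (n : ℕ) :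
    derivAlong V (fun y => f y ^ n) x = n * f x ^ (n - 1) * derivAlong V f x :=
  derivAlong_comp V (hasDerivAt_pow n (f x)) hf

theorem derivAlong_sqrt (hf : DifferentiableAt ℝ f x) (hx : f x ≠ 0) :
    derivAlong V (fun y => √(f y)) x = derivAlong V f x / (2 * √(f x)) := by
  rw [derivAlong_comp V (Real.hasDerivAt_sqrt hx) hf]
  ring

theorem derivAlong_div (hf : DifferentiableAt ℝ f x) (hg : DifferentiableAt ℝ g x)
    (hx : g x ≠ 0) :
    derivAlong V (fun y => f y / g y) x =
      (derivAlong V f x * g x - f x * derivAlong V g x) / g x ^ 2 := by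
  simp only [div_eq_mul_inv]
  rw [derivAlong_mul V (g := fun y => (g y)⁻¹) hf (hg.inv hx),
    derivAlong_comp V (hasDerivAt_inv hx) hg]
  field_simp
  ring

theorem derivAlong_derivAlong_sqrt (hf : ∀ᶠ y in 𝓝 x, DifferentiableAt ℝ f y)
    (hDf : DifferentiableAt ℝ (derivAlong V f) x) (hx : 0 < f x) :
    derivAlong V (derivAlong V fun y => √(f y)) x =
      derivAlong V (derivAlong V f) x / (2 * √(f x)) -
        derivAlong V (fun y => √(f y)) x ^ 2 / √(f x) := by
  have hfx := hf.self_of_nhds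
  have hpos : ∀ᶠ y in 𝓝 x, 0 < f y := hfx.continuousAt.eventually (lt_mem_nhds hx)
  have hD : derivAlong V (fun y => √(f y)) =ᶠ[𝓝 x] fun y => derivAlong V f y / (2 * √(f y)) :=
    (hf.and hpos).mono fun y ⟨hd, hp⟩ => derivAlong_sqrt V hd hp.ne'
  have hs : 0 < √(f x) := Real.sqrt_pos.2 hx
  rw [derivAlong_congr V hD, derivAlong_div V hDf ((hfx.sqrt hx.ne').const_mul 2) (by positivity),
    derivAlong_const_mul V (hfx.sqrt hx.ne'), derivAlong_sqrt V hfx hx.ne']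
  field_simp

end DerivAlong

theorem derivAlong_apply {ι : Type*} [Fintype ι] (V : (ι → ℝ) → ι → ℝ) (x : ι → ℝ) (i : ι) :
    derivAlong V (fun y => y i) x = V x i := by
  simp [derivAlong, (hasFDerivAt_apply i x).fderiv]

noncomputable def hnormFourth (x : Fin 3 → ℝ) : ℝ :=
  (x 0 ^ 2 + x 1 ^ 2) ^ 2 + x 2 ^ 2

def heisField1 (x : Fin 3 → ℝ) : Fin 3 → ℝ := ![1, 0, -x 1]

def heisField2 (x : Fin 3 → ℝ) : Fin 3 → ℝ := ![0, 1, x 0]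

theorem X1_eq_derivAlong (u : (Fin 3 → ℝ) → ℝ) : X1 u = derivAlong heisField1 u := by
  funext x
  have h : heisField1 x = Pi.single 0 1 - x 1 • Pi.single 2 1 := by
    ext i; fin_cases i <;> simp [heisField1]
  simp [X1, pd, derivAlong, h]

theorem X2_eq_derivAlong (u : (Fin 3 → ℝ) → ℝ) : X2 u = derivAlong heisField2 u := by
  funext x
  have h : heisField2 x = Pi.single 1 1 + x 0 • Pi.single 2 1 := by
    ext i; fin_cases i <;> simp [heisField2]
  simp [X2, pd, derivAlong, h]

theorem X1_hnormFourth :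
    X1 hnormFourth = fun y => 4 * y 0 * (y 0 ^ 2 + y 1 ^ 2) - 2 * y 1 * y 2 := by
  rw [X1_eq_derivAlong]
  funext y
  unfold hnormFourth
  simp (disch := fun_prop) only [derivAlong_add, derivAlong_pow, derivAlong_apply]
  simp [heisField1]
  ring

theorem X2_hnormFourth :
    X2 hnormFourth = fun y => 4 * y 1 * (y 0 ^ 2 + y 1 ^ 2) + 2 * y 0 * y 2 := by
  rw [X2_eq_derivAlong]
  funext y
  unfold hnormFourth
  simp (disch := fun_prop) only [derivAlong_add, derivAlong_pow, derivAlong_apply]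
  simp [heisField2]
  ring

theorem X1_X1_add_X2_X2_hnormFourth (x : Fin 3 → ℝ) :
    X1 (X1 hnormFourth) x + X2 (X2 hnormFourth) x = 18 * (x 0 ^ 2 + x 1 ^ 2) := by
  rw [X1_hnormFourth, X2_hnormFourth, X1_eq_derivAlong, X2_eq_derivAlong]
  simp (disch := fun_prop) only [derivAlong_add, derivAlong_sub, derivAlong_mul,
    derivAlong_const, derivAlong_pow, derivAlong_apply]
  simp [heisField1, heisField2]
  ring

theorem hnorm_sq (x : Fin 3 → ℝ) : hnorm x ^ 2 = √(hnormFourth x) := by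
  have h : 0 ≤ hnormFourth x := by unfold hnormFourth; positivity
  rw [show hnorm x = hnormFourth x ^ ((1 : ℝ) / 4) from rfl, ← Real.rpow_natCast,
    ← Real.rpow_mul h, Real.sqrt_eq_rpow]
  norm_num

theorem laplacianH_hnormSq (x : Fin 3 → ℝ) (hx : hnorm x ≠ 0) :
    X1 (X1 hnormSq) x + X2 (X2 hnormSq) x =
      9 * (x 0 ^ 2 + x 1 ^ 2) / hnorm x ^ 2 -
        ((X1 hnormSq x) ^ 2 + (X2 hnormSq x) ^ 2) / hnorm x ^ 2 := by
  have hF : 0 < hnormFourth x := Real.sqrt_ne_zero'.1 (hnorm_sq x ▸ pow_ne_zero 2 hx)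
  have hdiff : ∀ᶠ y in 𝓝 x, DifferentiableAt ℝ hnormFourth y :=
    Eventually.of_forall fun y => by unfold hnormFourth; fun_prop
  have hΔ := X1_X1_add_X2_X2_hnormFourth x
  have hD1 : DifferentiableAt ℝ (X1 hnormFourth) x := by rw [X1_hnormFourth]; fun_prop
  have hD2 : DifferentiableAt ℝ (X2 hnormFourth) x := by rw [X2_hnormFourth]; fun_prop
  rw [hnorm_sq, show hnormSq = fun y => √(hnormFourth y) from rfl]
  simp only [X1_eq_derivAlong, X2_eq_derivAlong] at hΔ hD1 hD2 ⊢
  rw [derivAlong_derivAlong_sqrt _ hdiff hD1 hF, derivAlong_derivAlong_sqrt _ hdiff hD2 hF]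
  field_simp
  linear_combination hΔ
end

section
/- Pavage property of the Heisenberg group: for every x ∈ ℝ³ there exists a unique pair (z, q) with z ∈ ℤ³ and q ∈ [0,1)³ such that x = z ⊕ q. -/
/-- The Heisenberg group operation on ℝ³. -/
def hop (x y : ℝ × ℝ × ℝ) : ℝ × ℝ × ℝ :=
  (x.1 + y.1, x.2.1 + y.2.1, x.2.2 + y.2.2 - x.2.1 * y.1 + x.1 * y.2.1)

/-- Embedding of ℤ³ into ℝ³. -/
def iz (z : ℤ × ℤ × ℤ) : ℝ × ℝ × ℝ := ((z.1 : ℝ), (z.2.1 : ℝ), (z.2.2 : ℝ))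

/-- Membership in the fundamental cell Q_H = [0,1)³. -/
def inQH (q : ℝ × ℝ × ℝ) : Prop :=
  q.1 ∈ Set.Ico (0 : ℝ) 1 ∧ q.2.1 ∈ Set.Ico (0 : ℝ) 1 ∧ q.2.2 ∈ Set.Ico (0 : ℝ) 1

lemma floor_fract_unique (r : ℝ) (n : ℤ) (q : ℝ) (h0 : 0 ≤ q) (h1 : q < 1)
    (he : (n : ℝ) + q = r) : n = ⌊r⌋ ∧ q = Int.fract r := by
  have hn : ⌊r⌋ = n := by
    rw [Int.floor_eq_iff]
    constructor
    · linarith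
    · linarith
  refine ⟨hn.symm, ?_⟩
  rw [Int.fract, hn]
  linarith

theorem heisenberg_pavage :
    ∀ x : ℝ × ℝ × ℝ, ∃! p : (ℤ × ℤ × ℤ) × (ℝ × ℝ × ℝ),
      inQH p.2 ∧ hop (iz p.1) p.2 = x := by
  rintro ⟨a, b, c⟩
  set t : ℝ := c + (⌊b⌋ : ℝ) * Int.fract a - (⌊a⌋ : ℝ) * Int.fract b with ht
  refine ⟨⟨⟨⌊a⌋, ⌊b⌋, ⌊t⌋⟩, ⟨Int.fract a, Int.fract b, Int.fract t⟩⟩, ⟨?_, ?_⟩, ?_⟩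
  · exact ⟨⟨Int.fract_nonneg _, Int.fract_lt_one _⟩,
      ⟨Int.fract_nonneg _, Int.fract_lt_one _⟩,
      ⟨Int.fract_nonneg _, Int.fract_lt_one _⟩⟩
  · simp only [hop, iz, Prod.mk.injEq]
    refine ⟨Int.floor_add_fract a, Int.floor_add_fract b, ?_⟩
    have h3 : (⌊t⌋ : ℝ) + Int.fract t = t := Int.floor_add_fract t
    rw [ht] at h3
    linarith
  · rintro ⟨⟨n1, n2, n3⟩, ⟨q1, q2, q3⟩⟩ ⟨⟨⟨hq10, hq11⟩, ⟨hq20, hq21⟩, ⟨hq30, hq31⟩⟩, heq⟩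
    simp only [hop, iz, Prod.mk.injEq] at heq
    obtain ⟨h1, h2, h3⟩ := heq
    obtain ⟨hn1, hf1⟩ := floor_fract_unique a n1 q1 hq10 hq11 h1
    obtain ⟨hn2, hf2⟩ := floor_fract_unique b n2 q2 hq20 hq21 h2
    have h3' : (n3 : ℝ) + q3 = t := by
      rw [ht, ← hn1, ← hn2, ← hf1, ← hf2]; linarith
    obtain ⟨hn3, hf3⟩ := floor_fract_unique t n3 q3 hq30 hq31 h3'
    simp [hn1, hn2, hn3, hf1, hf2, hf3]
end
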